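/- arXiv:2509.01901 — 4 statements merged into one kernel-verified Lean document; each statement's English description precedes it below -/
import Mathlib

section
/- For any simple graph G, if H is an even subgraph of G whose edge set has maximum cardinality among all even subgraphs of G, then the graph obtained from G by deleting the edges of H contains no cycle (i.e., G − E(H) is a forest). -/
/-!
Adding an edge-disjoint even subgraph to an even subgraph keeps it even and adds its edges to the
edge count. A cycle is an even subgraph with at least one edge, so a cycle avoiding the edges of a
maximum even subgraph `H` would give a larger even subgraph `H ⊔ C`.
-/

namespace SimpleGraph

variable {V : Type*} {G H K : SimpleGraph V}

def IsEven (G : SimpleGraph V) : Prop :=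
  ∀ v, Even (G.neighborSet v).ncard

section Finite

variable [Finite V]

theorem IsEven.sup_of_disjoint (hH : H.IsEven) (hK : K.IsEven) (hHK : Disjoint H K) :
    (H ⊔ K).IsEven := by
  intro v
  have hdisj : Disjoint (H.neighborSet v) (K.neighborSet v) :=
    Set.disjoint_left.mpr fun _ hH hK ↦ hHK.le_bot ⟨hH, hK⟩
  rw [neighborSet_sup, Set.ncard_union_eq hdisj]
  exact (hH v).add (hK v)

theorem ncard_edgeSet_sup_of_disjoint (hHK : Disjoint H K) :
    (H ⊔ K).edgeSet.ncard = H.edgeSet.ncard + K.edgeSet.ncard := by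
  rw [edgeSet_sup, Set.ncard_union_eq (disjoint_edgeSet.mpr hHK)]

theorem eq_bot_of_isEven_of_le_sdiff_of_maximal (hle : H ≤ G) (hH : H.IsEven)
    (hmax : ∀ H' ≤ G, H'.IsEven → H'.edgeSet.ncard ≤ H.edgeSet.ncard)
    (hKle : K ≤ G \ H) (hK : K.IsEven) : K = ⊥ := by
  have hHK : Disjoint H K := disjoint_sdiff_self_right.mono_right hKle
  have hsum := hmax (H ⊔ K) (sup_le hle (hKle.trans sdiff_le)) (hH.sup_of_disjoint hK hHK)
  rw [ncard_edgeSet_sup_of_disjoint hHK] at hsum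
  have hK0 : K.edgeSet = ∅ := (Set.ncard_eq_zero).mp (by omega)
  rwa [edgeSet_eq_empty] at hK0

end Finite

theorem Walk.IsCycle.isEven_spanningCoe_toSubgraph {u : V} {p : G.Walk u u} (hp : p.IsCycle) :
    p.toSubgraph.spanningCoe.IsEven := by
  intro v
  change Even (p.toSubgraph.neighborSet v).ncard
  by_cases hv : v ∈ p.support
  · rw [hp.ncard_neighborSet_toSubgraph_eq_two hv]
    exact even_two
  · have hempty : p.toSubgraph.neighborSet v = ∅ :=
      Set.eq_empty_of_forall_notMem fun w hw ↦ hv (p.mem_verts_toSubgraph.mp hw.fst_mem)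
    rw [hempty, Set.ncard_empty]
    exact Even.zero

end SimpleGraph

open SimpleGraph in
theorem maximum_even_subgraph_complement_acyclic_general
    {V : Type*} [Fintype V] (G H : SimpleGraph V)
    (hle : H ≤ G)
    (heven : ∀ v : V, Even ((H.neighborSet v).ncard))
    (hmax : ∀ H' : SimpleGraph V, H' ≤ G → (∀ v : V, Even ((H'.neighborSet v).ncard)) →
      H'.edgeSet.ncard ≤ H.edgeSet.ncard) :
    (G \ H).IsAcyclic := by
  intro v p hp
  have hbot : p.toSubgraph.spanningCoe = ⊥ :=
    eq_bot_of_isEven_of_le_sdiff_of_maximal hle heven hmax p.toSubgraph.spanningCoe_le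
      hp.isEven_spanningCoe_toSubgraph
  have hadj : p.toSubgraph.spanningCoe.Adj v p.snd := p.toSubgraph_adj_snd hp.not_nil
  simp [hbot] at hadj

/-- If `H` is an even subgraph of `G` whose edge set has maximum cardinality
among all even subgraphs of `G`, then `G - E(H)` is a forest. -/
theorem maximum_even_subgraph_complement_acyclic
    {V : Type*} [Fintype V] [DecidableEq V] (G H : SimpleGraph V)
    (hle : H ≤ G)
    (heven : ∀ v : V, Even ((H.neighborSet v).ncard))
    (hmax : ∀ H' : SimpleGraph V, H' ≤ G → (∀ v : V, Even ((H'.neighborSet v).ncard)) →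
      H'.edgeSet.ncard ≤ H.edgeSet.ncard) :
    (G \ H).IsAcyclic :=
  maximum_even_subgraph_complement_acyclic_general G H hle heven hmax
end

section
/- If G is an even simple graph with maximum degree Δ, then the edge set of G can be partitioned into Δ/2 parts, each of which is the edge set of a 2-regular subgraph of G; consequently re(G) = Δ/2, where re(G) is the minimum number of parts needed to partition E(G) into parts that are each the edge set of a 2-regular subgraph or a single edge. -/
/-- `s` is the edge set of a (not necessarily spanning) `2`-regular subgraph of `G`:
a subgraph in which every vertex has degree `0` (i.e. is not used) or exactly `2`. -/
def IsTwoRegularEdgeSet {V : Type*} (G : SimpleGraph V) (s : Set (Sym2 V)) : Prop :=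
  ∃ H : SimpleGraph V, H ≤ G ∧
    (∀ v : V, (H.neighborSet v).ncard = 0 ∨ (H.neighborSet v).ncard = 2) ∧
    s = H.edgeSet


namespace TwoRegAux

open Finset SimpleGraph

set_option linter.unusedSectionVars false
set_option linter.unnecessarySeqFocus false
set_option maxHeartbeats 1000000

variable {V : Type*} [Fintype V] [DecidableEq V]

lemma walk_countP_parity (G : SimpleGraph V) {a b : V} (w : G.Walk a b) (v : V) :
    (w.edges.countP (fun e => decide (v ∈ e)) + (if v = a then 1 else 0)
      + (if v = b then 1 else 0)) % 2 = 0 := by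
  induction w with
  | nil => by_cases h : v = ‹V› <;> simp [h, List.countP, List.countP.go]
  | @cons a c b h w ih =>
    have hac : a ≠ c := h.ne
    simp only [SimpleGraph.Walk.edges_cons, List.countP_cons]
    by_cases hva : v = a <;> by_cases hvc : v = c <;>
      simp only [hva, hvc, Sym2.mem_iff, decide_eq_true_eq] at ih ⊢ <;>
      simp_all <;> omega



lemma countP_toFinset {l : List (Sym2 V)} (hn : l.Nodup) (p : Sym2 V → Bool) :
    l.countP p = ((l.toFinset).filter (fun e => p e = true)).card := by
  rw [List.countP_eq_length_filter, ← List.toFinset_filter]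
  · exact (List.toFinset_card_of_nodup (hn.filter p)).symm

lemma exists_unused_edge (G : SimpleGraph V) [DecidableRel G.Adj]
    (heven : ∀ v, Even (G.degree v)) {v a : V} (w : G.Walk v a) (hw : w.IsTrail)
    (hva : v ≠ a) : ∃ u, G.Adj v u ∧ s(v, u) ∉ w.edges := by
  by_contra hcon
  push_neg at hcon
  have hset : G.incidenceFinset v = (w.edges.toFinset).filter (fun e => decide (v ∈ e) = true) := by
    ext e
    simp only [mem_incidenceFinset, Finset.mem_filter, List.mem_toFinset, decide_eq_true_eq]
    constructor
    · rintro ⟨he, hv⟩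
      refine ⟨?_, hv⟩
      have hspec := Sym2.other_spec' hv
      have hadj : G.Adj v (Sym2.Mem.other' hv) := by
        rw [← SimpleGraph.mem_edgeSet, hspec]; exact he
      have := hcon _ hadj
      rwa [hspec] at this
    · rintro ⟨he, hv⟩
      exact ⟨w.edges_subset_edgeSet he, hv⟩
  have hcount : w.edges.countP (fun e => decide (v ∈ e)) = G.degree v := by
    rw [countP_toFinset hw.edges_nodup, ← hset, card_incidenceFinset_eq_degree]
  have hpar := walk_countP_parity G w v
  have hdeg := (heven v)
  rw [Nat.even_iff] at hdeg
  rw [hcount, if_pos rfl, if_neg hva] at hpar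
  omega

lemma trail_length_le (G : SimpleGraph V) [DecidableRel G.Adj] {a b : V}
    {w : G.Walk a b} (hw : w.IsTrail) : w.length ≤ G.edgeFinset.card := by
  rw [← w.length_edges, ← List.toFinset_card_of_nodup hw.edges_nodup]
  apply Finset.card_le_card
  intro e he
  rw [List.mem_toFinset] at he
  rw [mem_edgeFinset]
  exact w.edges_subset_edgeSet he

lemma exists_closed_trail (G : SimpleGraph V) [DecidableRel G.Adj]
    (heven : ∀ v, Even (G.degree v)) {a b : V} (hab : G.Adj a b) :
    ∃ w : G.Walk a a, w.IsTrail ∧ 0 < w.length := by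
  suffices h : ∀ (n : ℕ) (v : V) (w : G.Walk v a), w.IsTrail → 0 < w.length →
      G.edgeFinset.card ≤ w.length + n → ∃ w : G.Walk a a, w.IsTrail ∧ 0 < w.length by
    refine h G.edgeFinset.card b (SimpleGraph.Walk.cons hab.symm SimpleGraph.Walk.nil) ?_ (by simp) (by rw [SimpleGraph.Walk.length_cons, SimpleGraph.Walk.length_nil]; omega)
    simp [SimpleGraph.Walk.IsTrail]
  intro n
  induction n with
  | zero =>
    intro v w hw hl hc
    by_cases hva : v = a
    · subst hva; exact ⟨w, hw, hl⟩
    · obtain ⟨u, hadj, hnotin⟩ := exists_unused_edge G heven w hw hva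
      set w2 : G.Walk u a := SimpleGraph.Walk.cons hadj.symm w with hw2
      have hw2t : w2.IsTrail := by
        rw [hw2, SimpleGraph.Walk.isTrail_cons]
        exact ⟨hw, by rwa [Sym2.eq_swap]⟩
      have := trail_length_le G hw2t
      simp only [hw2, SimpleGraph.Walk.length_cons] at this
      omega
  | succ n ih =>
    intro v w hw hl hc
    by_cases hva : v = a
    · subst hva; exact ⟨w, hw, hl⟩
    · obtain ⟨u, hadj, hnotin⟩ := exists_unused_edge G heven w hw hva
      refine ih u (SimpleGraph.Walk.cons hadj.symm w) ?_ (by simp) (by rw [SimpleGraph.Walk.length_cons]; omega)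
      rw [SimpleGraph.Walk.isTrail_cons]
      exact ⟨hw, by rwa [Sym2.eq_swap]⟩

lemma trail_orientation (G : SimpleGraph V) {a b : V} (w : G.Walk a b) (hw : w.IsTrail) :
    ∃ o : Sym2 V → V, (∀ e ∈ w.edges, o e ∈ e) ∧
      ∀ v, w.edges.countP (fun e => decide (v ∈ e) && !decide (o e = v)) + (if v = b then 1 else 0)
         = w.edges.countP (fun e => decide (v ∈ e) && decide (o e = v)) + (if v = a then 1 else 0) := by
  induction w with
  | nil =>
    exact ⟨fun e => e.out.1, by simp, fun v => by simp⟩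
  | @cons a c b h w ih =>
    rw [SimpleGraph.Walk.isTrail_cons] at hw
    obtain ⟨o', ho'mem, ho'cnt⟩ := ih hw.1
    have hac : a ≠ c := h.ne
    refine ⟨Function.update o' s(a, c) c, ?_, ?_⟩
    · intro e he
      rw [SimpleGraph.Walk.edges_cons, List.mem_cons] at he
      rcases he with rfl | he
      · rw [Function.update_self]; simp
      · rw [Function.update_of_ne (by rintro rfl; exact hw.2 he)]
        exact ho'mem e he
    · intro v
      have h1 : w.edges.countP (fun e => decide (v ∈ e) && !decide ((Function.update o' s(a,c) c) e = v))
          = w.edges.countP (fun e => decide (v ∈ e) && !decide (o' e = v)) :=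
        List.countP_congr (fun e he => by
          rw [Function.update_of_ne (by rintro rfl; exact hw.2 he)])
      have h2 : w.edges.countP (fun e => decide (v ∈ e) && decide ((Function.update o' s(a,c) c) e = v))
          = w.edges.countP (fun e => decide (v ∈ e) && decide (o' e = v)) :=
        List.countP_congr (fun e he => by
          rw [Function.update_of_ne (by rintro rfl; exact hw.2 he)])
      simp only [SimpleGraph.Walk.edges_cons, List.countP_cons, h1, h2, Function.update_self]
      have hic := ho'cnt v
      by_cases hva : v = a <;> by_cases hvc : v = c <;>
        simp [hva, hvc, hac, Ne.symm hac, Sym2.mem_iff] at hic ⊢ <;> omega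

lemma countP_split {α : Type*} (l : List α) (p q : α → Bool) :
    l.countP p = l.countP (fun a => p a && q a) + l.countP (fun a => p a && !q a) := by
  induction l with
  | nil => simp
  | cons a l ih =>
    simp only [List.countP_cons, ih]
    cases hp : p a <;> cases hq : q a <;> simp [hp, hq] <;> omega

lemma count_conv (G : SimpleGraph V) [DecidableRel G.Adj] {L : List (Sym2 V)} (hn : L.Nodup)
    (hsub : ∀ e ∈ L, e ∈ G.edgeSet) (v : V) (p : Sym2 V → Bool) :
    ((G.neighborFinset v).filter (fun u => s(v,u) ∈ L ∧ p s(v,u) = true)).card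
      = L.countP (fun e => decide (v ∈ e) && p e) := by
  rw [countP_toFinset hn]
  apply Finset.card_bij (fun u _ => s(v,u))
  · intro u hu
    simp only [Finset.mem_filter, mem_neighborFinset] at hu
    simp only [Finset.mem_filter, List.mem_toFinset, Bool.and_eq_true, decide_eq_true_eq]
    exact ⟨hu.2.1, ⟨Sym2.mem_mk_left v u, hu.2.2⟩⟩
  · intro u1 h1 u2 h2 heq
    exact (Sym2.congr_right).1 heq
  · intro e he
    simp only [Finset.mem_filter, List.mem_toFinset, Bool.and_eq_true, decide_eq_true_eq] at he
    obtain ⟨heL, hve, hpe⟩ := he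
    refine ⟨Sym2.Mem.other' hve, ?_, Sym2.other_spec' hve⟩
    have hadj : G.Adj v (Sym2.Mem.other' hve) := by
      rw [← SimpleGraph.mem_edgeSet, Sym2.other_spec' hve]
      exact hsub e heL
    simp only [Finset.mem_filter, mem_neighborFinset, Sym2.other_spec' hve]
    exact ⟨hadj, heL, hpe⟩

theorem exists_euler_orient : ∀ (n : ℕ) (G : SimpleGraph V) [DecidableRel G.Adj],
    G.edgeFinset.card ≤ n → (∀ v, Even (G.degree v)) →
    ∃ o : Sym2 V → V, (∀ e, o e ∈ e) ∧
      ∀ v, ((G.neighborFinset v).filter (fun u => o s(v,u) = u)).card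
          = ((G.neighborFinset v).filter (fun u => o s(v,u) = v)).card := by
  have base : ∀ (G : SimpleGraph V) [DecidableRel G.Adj], G.edgeFinset = ∅ →
      ∃ o : Sym2 V → V, (∀ e, o e ∈ e) ∧
      ∀ v, ((G.neighborFinset v).filter (fun u => o s(v,u) = u)).card
          = ((G.neighborFinset v).filter (fun u => o s(v,u) = v)).card := by
    intro G _ hG
    refine ⟨fun e => e.out.1, fun e => Sym2.out_fst_mem e, fun v => ?_⟩
    have hnb : G.neighborFinset v = ∅ := by
      rw [Finset.eq_empty_iff_forall_notMem]
      intro u hu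
      rw [mem_neighborFinset] at hu
      have : s(v,u) ∈ G.edgeFinset := by rwa [mem_edgeFinset, SimpleGraph.mem_edgeSet]
      simp [hG] at this
    rw [hnb]; simp
  intro n
  induction n with
  | zero =>
    intro G _ hc heven
    exact base G (Finset.card_eq_zero.1 (Nat.le_zero.1 hc))
  | succ n ih =>
    intro G _ hc heven
    by_cases h0 : G.edgeFinset = ∅
    · exact base G h0
    · obtain ⟨e0, he0⟩ := Finset.nonempty_of_ne_empty h0
      induction e0 using Sym2.ind with
      | _ a b =>
      rw [mem_edgeFinset, SimpleGraph.mem_edgeSet] at he0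
      obtain ⟨w, hwt, hwl⟩ := exists_closed_trail G heven he0
      obtain ⟨ow, howmem, howcnt⟩ := trail_orientation G w hwt
      set L := w.edges with hL
      have hLnd : L.Nodup := hwt.edges_nodup
      have hLsub : ∀ e ∈ L, e ∈ G.edgeSet := fun e he => w.edges_subset_edgeSet he
      set G' := G.deleteEdges {e | e ∈ L} with hG'
      letI : DecidableRel G'.Adj := fun x y =>
        decidable_of_iff (G.Adj x y ∧ s(x,y) ∉ L) (by rw [hG', SimpleGraph.deleteEdges_adj]; rfl)
      -- neighbor finset of G'
      have hnb' : ∀ v, G'.neighborFinset v = (G.neighborFinset v).filter (fun u => s(v,u) ∉ L) := by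
        intro v
        ext u
        simp only [mem_neighborFinset, Finset.mem_filter, hG', SimpleGraph.deleteEdges_adj]
        exact ⟨fun h => ⟨h.1, h.2⟩, fun h => ⟨h.1, h.2⟩⟩
      -- counts over L at each vertex
      have hcnt_even : ∀ v, ((G.neighborFinset v).filter (fun u => s(v,u) ∈ L)).card
          = L.countP (fun e => decide (v ∈ e)) ∧ Even (L.countP (fun e => decide (v ∈ e))) := by
        intro v
        have h1 : ((G.neighborFinset v).filter (fun u => s(v,u) ∈ L ∧ (fun _ => true) s(v,u) = true)).card
            = L.countP (fun e => decide (v ∈ e) && (fun _ => true) e) :=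
          count_conv G hLnd hLsub v (fun _ => true)
        simp only [Bool.and_true] at h1
        have h2 : ((G.neighborFinset v).filter (fun u => s(v,u) ∈ L)).card
            = L.countP (fun e => decide (v ∈ e)) := by
          rw [← h1]; congr 1; apply Finset.filter_congr; intro u _; simp
        refine ⟨h2, ?_⟩
        have hsplit := countP_split L (fun e => decide (v ∈ e)) (fun e => decide (ow e = v))
        have hcnt := howcnt v
        rw [Nat.add_right_cancel_iff] at hcnt
        have : ∀ x : Sym2 V, (decide (v ∈ x) && !decide (ow x = v)) = (decide (v ∈ x) && (fun e => !decide (ow e = v)) x) := fun _ => rfl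
        rw [hsplit, ← hcnt]
        exact ⟨_, rfl⟩
      -- G' is even
      have hdeg' : ∀ v, G'.degree v + L.countP (fun e => decide (v ∈ e)) = G.degree v := by
        intro v
        have hpart := Finset.card_filter_add_card_filter_not
          (s := G.neighborFinset v) (p := fun u => s(v,u) ∈ L)
        have h1 : G'.degree v = ((G.neighborFinset v).filter (fun u => s(v,u) ∉ L)).card := by
          rw [SimpleGraph.degree, hnb' v]
        have h2 : G.degree v = (G.neighborFinset v).card := rfl
        have h3 := (hcnt_even v).1
        omega
      have heven' : ∀ v, Even (G'.degree v) := by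
        intro v
        have h1 := heven v
        rw [← hdeg' v, Nat.even_add] at h1
        exact h1.2 (hcnt_even v).2
      -- fewer edges
      have hsubE : G'.edgeFinset ⊆ G.edgeFinset := by
        intro e he
        rw [mem_edgeFinset, hG', SimpleGraph.edgeSet_deleteEdges] at he
        rw [mem_edgeFinset]; exact he.1
      obtain ⟨e1, he1L⟩ := List.exists_mem_of_length_pos (by rw [w.length_edges]; exact hwl)
      have he1G : e1 ∈ G.edgeFinset := by rw [mem_edgeFinset]; exact hLsub e1 he1L
      have he1G' : e1 ∉ G'.edgeFinset := by
        rw [mem_edgeFinset, hG', SimpleGraph.edgeSet_deleteEdges]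
        exact fun hc => hc.2 he1L
      have hlt : G'.edgeFinset.card < G.edgeFinset.card :=
        Finset.card_lt_card ((Finset.ssubset_iff_of_subset hsubE).2 ⟨e1, he1G, he1G'⟩)
      obtain ⟨o', ho'mem, ho'cnt⟩ := ih G' (by omega) heven'
      refine ⟨fun e => if e ∈ L then ow e else o' e, ?_, ?_⟩
      · intro e
        by_cases he : e ∈ L
        · simpa [he] using howmem e he
        · simpa [he] using ho'mem e
      · intro v
        beta_reduce
        set A := G.neighborFinset v with hA
        have hne : ∀ u ∈ A, v ≠ u := by
          intro u hu; rw [hA, mem_neighborFinset] at hu; exact G.ne_of_adj hu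
        have hout_w : (A.filter (fun u => s(v,u) ∈ L ∧ (if s(v,u) ∈ L then ow s(v,u) else o' s(v,u)) = u)).card
            = L.countP (fun e => decide (v ∈ e) && !decide (ow e = v)) := by
          refine Eq.trans ?_ (count_conv G hLnd hLsub v (fun e => !decide (ow e = v)))
          congr 1
          apply Finset.filter_congr
          intro u hu
          constructor
          · rintro ⟨h1, h2⟩
            rw [if_pos h1] at h2
            refine ⟨h1, ?_⟩
            simp only [Bool.not_eq_true', decide_eq_false_iff_not]
            rw [h2]; exact fun hc => (hne u hu) hc.symm
          · rintro ⟨h1, h2⟩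
            simp only [Bool.not_eq_true', decide_eq_false_iff_not] at h2
            refine ⟨h1, ?_⟩
            rw [if_pos h1]
            have hmem := howmem _ h1
            rw [Sym2.mem_iff] at hmem
            tauto
        have hin_w : (A.filter (fun u => s(v,u) ∈ L ∧ (if s(v,u) ∈ L then ow s(v,u) else o' s(v,u)) = v)).card
            = L.countP (fun e => decide (v ∈ e) && decide (ow e = v)) := by
          refine Eq.trans ?_ (count_conv G hLnd hLsub v (fun e => decide (ow e = v)))
          congr 1
          apply Finset.filter_congr
          intro u hu
          constructor
          · rintro ⟨h1, h2⟩; rw [if_pos h1] at h2; simp [h1, h2]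
          · rintro ⟨h1, h2⟩; simp only [decide_eq_true_eq] at h2; rw [if_pos h1]; exact ⟨h1, h2⟩
        have hout' : (A.filter (fun u => s(v,u) ∉ L ∧ (if s(v,u) ∈ L then ow s(v,u) else o' s(v,u)) = u)).card
            = ((G'.neighborFinset v).filter (fun u => o' s(v,u) = u)).card := by
          rw [hnb' v, Finset.filter_filter]
          congr 1
          apply Finset.filter_congr
          intro u hu
          constructor
          · rintro ⟨h1, h2⟩; rw [if_neg h1] at h2; exact ⟨h1, h2⟩
          · rintro ⟨h1, h2⟩; rw [if_neg h1]; exact ⟨h1, h2⟩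
        have hin' : (A.filter (fun u => s(v,u) ∉ L ∧ (if s(v,u) ∈ L then ow s(v,u) else o' s(v,u)) = v)).card
            = ((G'.neighborFinset v).filter (fun u => o' s(v,u) = v)).card := by
          rw [hnb' v, Finset.filter_filter]
          congr 1
          apply Finset.filter_congr
          intro u hu
          constructor
          · rintro ⟨h1, h2⟩; rw [if_neg h1] at h2; exact ⟨h1, h2⟩
          · rintro ⟨h1, h2⟩; rw [if_neg h1]; exact ⟨h1, h2⟩
        have hw_eq : L.countP (fun e => decide (v ∈ e) && !decide (ow e = v))
            = L.countP (fun e => decide (v ∈ e) && decide (ow e = v)) := by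
          have := howcnt v
          omega
        have hsplit1 : (A.filter (fun u => (if s(v,u) ∈ L then ow s(v,u) else o' s(v,u)) = u)).card
            = (A.filter (fun u => s(v,u) ∈ L ∧ (if s(v,u) ∈ L then ow s(v,u) else o' s(v,u)) = u)).card
              + (A.filter (fun u => s(v,u) ∉ L ∧ (if s(v,u) ∈ L then ow s(v,u) else o' s(v,u)) = u)).card := by
          have h := Finset.card_filter_add_card_filter_not
            (s := A.filter (fun u => (if s(v,u) ∈ L then ow s(v,u) else o' s(v,u)) = u))
            (p := fun u => s(v,u) ∈ L)
          rw [Finset.filter_filter, Finset.filter_filter] at h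
          rw [← h]
          congr 1 <;> · congr 1; apply Finset.filter_congr; intro u _; simp [and_comm]
        have hsplit2 : (A.filter (fun u => (if s(v,u) ∈ L then ow s(v,u) else o' s(v,u)) = v)).card
            = (A.filter (fun u => s(v,u) ∈ L ∧ (if s(v,u) ∈ L then ow s(v,u) else o' s(v,u)) = v)).card
              + (A.filter (fun u => s(v,u) ∉ L ∧ (if s(v,u) ∈ L then ow s(v,u) else o' s(v,u)) = v)).card := by
          have h := Finset.card_filter_add_card_filter_not
            (s := A.filter (fun u => (if s(v,u) ∈ L then ow s(v,u) else o' s(v,u)) = v))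
            (p := fun u => s(v,u) ∈ L)
          rw [Finset.filter_filter, Finset.filter_filter] at h
          rw [← h]
          congr 1 <;> · congr 1; apply Finset.filter_congr; intro u _; simp [and_comm]
        rw [hsplit1, hsplit2, hout_w, hin_w, hout', hin', hw_eq, ho'cnt v]


theorem exists_two_regular_cover (G : SimpleGraph V) [DecidableRel G.Adj] (k : ℕ) (hk : 1 ≤ k)
    (heven : ∀ v, Even (G.degree v)) (hdeg : ∀ v, G.degree v ≤ 2 * k) :
    ∃ H : SimpleGraph V, H ≤ G ∧
      (∀ v, (H.neighborSet v).ncard = 0 ∨ (H.neighborSet v).ncard = 2) ∧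
      (∀ v, G.degree v = 2 * k → (H.neighborSet v).ncard = 2) := by
  obtain ⟨o, homem, hocnt⟩ := exists_euler_orient G.edgeFinset.card G le_rfl heven
  set outF : V → Finset V := fun v => (G.neighborFinset v).filter (fun u => o s(v,u) = u)
    with houtF
  have hoeq : ∀ (v u : V), u ∈ G.neighborFinset v → o s(v,u) = u ∨ o s(v,u) = v := by
    intro v u hu
    have := homem s(v,u)
    rw [Sym2.mem_iff] at this
    tauto
  have hhalf : ∀ v, 2 * (outF v).card = G.degree v := by
    intro v
    have hpart := Finset.card_filter_add_card_filter_not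
      (s := G.neighborFinset v) (p := fun u => o s(v,u) = u)
    have hcompl : ((G.neighborFinset v).filter (fun u => ¬ o s(v,u) = u)).card
        = ((G.neighborFinset v).filter (fun u => o s(v,u) = v)).card := by
      congr 1
      apply Finset.filter_congr
      intro u hu
      have hne : v ≠ u := G.ne_of_adj (by rwa [← mem_neighborFinset])
      have := hoeq v u hu
      constructor
      · intro h; tauto
      · intro h hc; rw [← h, hc] at hne; exact hne rfl
    have h2 := hocnt v
    have h3 : G.degree v = (G.neighborFinset v).card := rfl
    have h4 : (outF v).card = ((G.neighborFinset v).filter (fun u => o s(v,u) = u)).card := rfl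
    omega
  -- the Hall family
  set t : V → Finset V := fun v => if G.degree v = 2 * k then outF v else insert v (outF v)
    with ht
  have hhall : ∀ s : Finset V, s.card ≤ (s.biUnion t).card := by
    intro s
    set N := s.biUnion t with hN
    have houtsub : ∀ v ∈ s, outF v ⊆ N := by
      intro v hv
      refine Finset.Subset.trans ?_ (Finset.subset_biUnion_of_mem t hv)
      simp only [ht]
      by_cases hd : G.degree v = 2 * k
      · rw [if_pos hd]
      · rw [if_neg hd]; exact Finset.subset_insert _ _
    have hself : ∀ v ∈ s, G.degree v ≠ 2 * k → v ∈ N := by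
      intro v hv hvd
      apply Finset.mem_biUnion.2 ⟨v, hv, ?_⟩
      simp only [ht]
      rw [if_neg hvd]; exact Finset.mem_insert_self _ _
    -- in-degree bound per u : #incoming from s ≤ (outF u).card
    have hin : ∀ u, (s.filter (fun v => u ∈ outF v)).card ≤ (outF u).card := by
      intro u
      have h1 : (s.filter (fun v => u ∈ outF v)).card
          ≤ ((G.neighborFinset u).filter (fun w => o s(u,w) = u)).card := by
        apply Finset.card_le_card
        intro v hv
        rw [Finset.mem_filter] at hv
        obtain ⟨hvs, hvout⟩ := hv
        rw [houtF, Finset.mem_filter, mem_neighborFinset] at hvout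
        rw [Finset.mem_filter, mem_neighborFinset]
        refine ⟨hvout.1.symm, ?_⟩
        rw [Sym2.eq_swap]
        exact hvout.2
      calc (s.filter (fun v => u ∈ outF v)).card
          ≤ ((G.neighborFinset u).filter (fun w => o s(u,w) = u)).card := h1
        _ = ((G.neighborFinset u).filter (fun w => o s(u,w) = w)).card := (hocnt u).symm
        _ = (outF u).card := rfl
    -- double counting
    have hdouble : (∑ v ∈ s, (outF v).card) = ∑ u ∈ N, (s.filter (fun v => u ∈ outF v)).card := by
      have h1 : ∀ v ∈ s, (outF v).card = ∑ u ∈ N, (if u ∈ outF v then 1 else 0) := by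
        intro v hv
        rw [Finset.sum_ite_mem, Finset.inter_eq_right.2 (houtsub v hv)]
        exact Finset.card_eq_sum_ones _
      rw [Finset.sum_congr rfl h1, Finset.sum_comm]
      apply Finset.sum_congr rfl
      intro u _
      rw [Finset.card_filter]
    have hidle : (∑ v ∈ s, (k - (outF v).card))
        = ∑ u ∈ N, (if u ∈ s ∧ G.degree u ≠ 2 * k then k - (outF u).card else 0) := by
      rw [Finset.sum_ite, Finset.sum_const_zero, add_zero]
      rw [show N.filter (fun u => u ∈ s ∧ G.degree u ≠ 2 * k)
          = s.filter (fun u => G.degree u ≠ 2 * k) from ?_]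
      · rw [Finset.sum_filter]
        apply Finset.sum_congr rfl
        intro v hv
        by_cases hd : G.degree v ≠ 2 * k
        · rw [if_pos hd]
        · push_neg at hd
          rw [if_neg (by simp [hd])]
          have : (outF v).card = k := by have := hhalf v; omega
          omega
      · ext u
        simp only [Finset.mem_filter]
        constructor
        · rintro ⟨_, hu, hd⟩; exact ⟨hu, hd⟩
        · rintro ⟨hu, hd⟩; exact ⟨hself u hu hd, hu, hd⟩
    have hbound : ∀ u ∈ N, (s.filter (fun v => u ∈ outF v)).card
        + (if u ∈ s ∧ G.degree u ≠ 2 * k then k - (outF u).card else 0) ≤ k := by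
      intro u _
      have h1 := hin u
      have h2 := hhalf u
      have h3 := hdeg u
      by_cases hc : u ∈ s ∧ G.degree u ≠ 2 * k
      · rw [if_pos hc]; omega
      · rw [if_neg hc]; omega
    have hmain : k * s.card ≤ k * N.card := by
      have hout_le : ∀ v, (outF v).card ≤ k := by
        intro v; have := hhalf v; have := hdeg v; omega
      calc k * s.card = ∑ v ∈ s, k := by rw [Finset.sum_const, smul_eq_mul, mul_comm]
        _ = ∑ v ∈ s, ((outF v).card + (k - (outF v).card)) := by
            apply Finset.sum_congr rfl; intro v _; have := hout_le v; omega
        _ = (∑ v ∈ s, (outF v).card) + ∑ v ∈ s, (k - (outF v).card) := Finset.sum_add_distrib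
        _ = ∑ u ∈ N, ((s.filter (fun v => u ∈ outF v)).card
              + (if u ∈ s ∧ G.degree u ≠ 2 * k then k - (outF u).card else 0)) := by
            rw [hdouble, hidle, ← Finset.sum_add_distrib]
        _ ≤ ∑ u ∈ N, k := Finset.sum_le_sum hbound
        _ = k * N.card := by rw [Finset.sum_const, smul_eq_mul, mul_comm]
    exact Nat.le_of_mul_le_mul_left hmain hk
  obtain ⟨f, hfinj, hft⟩ := (Finset.all_card_le_biUnion_card_iff_exists_injective t).1 hhall
  have hfout : ∀ x, f x ≠ x → (x ∈ G.neighborFinset (f x)) ∧ G.Adj x (f x) ∧ o s(x, f x) = f x := by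
    intro x hx
    have hthis := hft x
    simp only [ht] at hthis
    have hmem : f x ∈ outF x := by
      by_cases hd : G.degree x = 2 * k
      · rwa [if_pos hd] at hthis
      · rw [if_neg hd, Finset.mem_insert] at hthis
        tauto
    rw [houtF, Finset.mem_filter, mem_neighborFinset] at hmem
    exact ⟨by rw [mem_neighborFinset]; exact hmem.1.symm, hmem.1, hmem.2⟩
  have hfbij : Function.Bijective f := (Finite.injective_iff_bijective).1 hfinj
  let H : SimpleGraph V :=
    { Adj := fun x y => x ≠ y ∧ (f x = y ∨ f y = x)
      symm := by constructor; rintro x y ⟨h1, h2⟩; exact ⟨h1.symm, h2.symm⟩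
      loopless := by constructor; rintro x ⟨h1, _⟩; exact h1 rfl }
  have hadj : ∀ x y, H.Adj x y ↔ (x ≠ y ∧ (f x = y ∨ f y = x)) := fun _ _ => Iff.rfl
  have key : ∀ v, f v ≠ v → (H.neighborSet v).ncard = 2 := by
    intro v hfv
    obtain ⟨u, hu⟩ := hfbij.2 v
    have huv : u ≠ v := by rintro rfl; exact hfv hu
    have hset : H.neighborSet v = {f v, u} := by
      ext y
      rw [SimpleGraph.mem_neighborSet, hadj]
      constructor
      · rintro ⟨h1, h2 | h2⟩
        · exact Set.mem_insert_iff.2 (Or.inl h2.symm)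
        · refine Set.mem_insert_iff.2 (Or.inr ?_)
          have : y = u := hfinj (by rw [h2, hu])
          simp [this]
      · intro hy
        rcases Set.mem_insert_iff.1 hy with rfl | hy
        · exact ⟨fun hc => hfv hc.symm, Or.inl rfl⟩
        · rw [Set.mem_singleton_iff] at hy
          subst hy
          exact ⟨huv.symm, Or.inr hu⟩
    rw [hset]
    apply Set.ncard_pair
    intro hc
    have h1 := (hfout v hfv).2.2
    have h2 : f u ≠ u := by rw [hu]; exact huv.symm
    have h3 := (hfout u h2).2.2
    rw [hu] at h3
    rw [hc] at h1
    rw [Sym2.eq_swap] at h3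
    rw [h3] at h1
    exact huv h1.symm
  refine ⟨H, ?_, ?_, ?_⟩
  · rintro x y hxy
    rw [hadj] at hxy
    obtain ⟨h1, h2 | h2⟩ := hxy
    · subst h2; exact ((hfout x (fun hc => h1 hc.symm)).2.1)
    · subst h2; exact ((hfout y (fun hc => h1 hc)).2.1).symm
  · intro v
    by_cases hfv : f v = v
    · left
      rw [Set.ncard_eq_zero]
      ext y
      rw [SimpleGraph.mem_neighborSet, hadj]
      simp only [Set.mem_empty_iff_false, iff_false]
      rintro ⟨h1, h2 | h2⟩
      · exact h1 (by rw [← hfv, h2])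
      · exact h1 (hfinj (by rw [h2, hfv])).symm
    · exact Or.inr (key v hfv)
  · intro v hdv
    apply key
    have hthis := hft v
    simp only [ht] at hthis
    rw [if_pos hdv] at hthis
    rw [houtF, Finset.mem_filter, mem_neighborFinset] at hthis
    exact fun hc => (G.ne_of_adj hthis.1) hc.symm


theorem two_regular_decomp : ∀ (k : ℕ) (G : SimpleGraph V) [DecidableRel G.Adj],
    (∀ v, Even (G.degree v)) → (∀ v, G.degree v ≤ 2 * k) →
    ∃ f : Fin k → Set (Sym2 V),
      (∀ i, IsTwoRegularEdgeSet G (f i)) ∧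
      (∀ i j, i ≠ j → Disjoint (f i) (f j)) ∧
      (∀ e, e ∈ G.edgeSet ↔ ∃ i, e ∈ f i) := by
  intro k
  induction k with
  | zero =>
    intro G _ heven hdeg
    refine ⟨Fin.elim0, fun i => i.elim0, fun i => i.elim0, ?_⟩
    intro e
    constructor
    · intro he
      exfalso
      induction e using Sym2.ind with
      | _ a b =>
        rw [SimpleGraph.mem_edgeSet] at he
        have h1 : 0 < G.degree a := G.degree_pos_iff_exists_adj a |>.2 ⟨b, he⟩
        have h2 := hdeg a
        omega
    · rintro ⟨i, _⟩; exact i.elim0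
  | succ k ih =>
    intro G _ heven hdeg
    obtain ⟨H, hHle, hH02, hHcov⟩ := exists_two_regular_cover G (k+1) (by omega) heven hdeg
    letI : DecidableRel H.Adj := Classical.decRel _
    set G' := G.deleteEdges H.edgeSet with hG'
    letI : DecidableRel G'.Adj := Classical.decRel _
    have hHsub : ∀ v, H.neighborFinset v ⊆ G.neighborFinset v := by
      intro v u hu
      rw [mem_neighborFinset] at hu ⊢
      exact hHle hu
    have hnb' : ∀ v, G'.neighborFinset v = G.neighborFinset v \ H.neighborFinset v := by
      intro v
      ext u
      simp only [mem_neighborFinset, Finset.mem_sdiff, hG', SimpleGraph.deleteEdges_adj,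
        SimpleGraph.mem_edgeSet]
    have hHdeg : ∀ v, (H.neighborSet v).ncard = (H.neighborFinset v).card := by
      intro v
      rw [SimpleGraph.neighborFinset, Set.ncard_eq_toFinset_card']
    have hdeg' : ∀ v, G'.degree v + (H.neighborSet v).ncard = G.degree v := by
      intro v
      have h1 : G'.degree v = (G.neighborFinset v).card - (H.neighborFinset v).card := by
        rw [SimpleGraph.degree, hnb' v, Finset.card_sdiff_of_subset (hHsub v)]
      have h2 := Finset.card_le_card (hHsub v)
      have h3 : G.degree v = (G.neighborFinset v).card := rfl
      rw [hHdeg]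
      omega
    have heven' : ∀ v, Even (G'.degree v) := by
      intro v
      have h1 := heven v
      have h2 := hdeg' v
      rw [Nat.even_iff] at h1 ⊢
      rcases hH02 v with h | h <;> rw [h] at h2 <;> omega
    have hbound' : ∀ v, G'.degree v ≤ 2 * k := by
      intro v
      have h2 := hdeg' v
      by_cases hd : G.degree v = 2 * (k + 1)
      · have h3 := hHcov v hd
        omega
      · have h4 := heven v
        have h5 := hdeg v
        rw [Nat.even_iff] at h4
        omega
    obtain ⟨f', hf'reg, hf'dis, hf'cov⟩ := ih G' heven' hbound'
    have hG'edge : G'.edgeSet = G.edgeSet \ H.edgeSet := by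
      rw [hG', SimpleGraph.edgeSet_deleteEdges]
    have hHedge : H.edgeSet ⊆ G.edgeSet := SimpleGraph.edgeSet_mono hHle
    have hG'le : G' ≤ G := by rw [hG']; exact SimpleGraph.deleteEdges_le _
    have hsub' : ∀ i, f' i ⊆ G'.edgeSet := fun i e he => (hf'cov e).2 ⟨i, he⟩
    refine ⟨Fin.cases H.edgeSet f', ?_, ?_, ?_⟩
    · intro i
      induction i using Fin.cases with
      | zero => exact ⟨H, hHle, hH02, (by simp only [Fin.cases_zero])⟩
      | succ j =>
        obtain ⟨K, hK1, hK2, hK3⟩ := hf'reg j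
        exact ⟨K, le_trans hK1 hG'le, hK2, (by simp only [Fin.cases_succ]; exact hK3)⟩
    · intro i j hij
      induction i using Fin.cases with
      | zero =>
        induction j using Fin.cases with
        | zero => exact absurd rfl hij
        | succ j =>
          simp only [Fin.cases_zero, Fin.cases_succ]
          rw [Set.disjoint_left]
          intro e he hc
          have := hsub' j hc
          rw [hG'edge] at this
          exact this.2 he
      | succ i =>
        induction j using Fin.cases with
        | zero =>
          simp only [Fin.cases_zero, Fin.cases_succ]
          rw [Set.disjoint_right]
          intro e he hc
          have := hsub' i hc
          rw [hG'edge] at this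
          exact this.2 he
        | succ j =>
          simp only [Fin.cases_succ]
          exact hf'dis i j (fun hc => hij (by rw [hc]))
    · intro e
      constructor
      · intro he
        by_cases heH : e ∈ H.edgeSet
        · exact ⟨0, by simp only [Fin.cases_zero]; exact heH⟩
        · have hmem : e ∈ G'.edgeSet := by rw [hG'edge]; exact ⟨he, heH⟩
          obtain ⟨i, hi⟩ := (hf'cov e).1 hmem
          exact ⟨i.succ, by simp only [Fin.cases_succ]; exact hi⟩
      · rintro ⟨i, hi⟩
        induction i using Fin.cases with
        | zero =>
          simp only [Fin.cases_zero] at hi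
          exact hHedge hi
        | succ j =>
          simp only [Fin.cases_succ] at hi
          have := hsub' j hi
          rw [hG'edge] at this
          exact this.1


end TwoRegAux

open Finset SimpleGraph in
set_option maxHeartbeats 1000000 in
/-- If `G` is an even simple graph with maximum degree `Δ`, then `E(G)` can
be partitioned into `Δ/2` parts, each the edge set of a `2`-regular subgraph of `G`;
moreover every partition of `E(G)` into parts that are each the edge set of a `2`-regular
subgraph or a single edge has at least `Δ/2` parts.  Consequently `re(G) = Δ/2`. -/
theorem even_graph_two_regular_decomposition
    {V : Type*} [Fintype V] [DecidableEq V] (G : SimpleGraph V) [DecidableRel G.Adj]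
    (heven : ∀ v : V, Even (G.degree v)) :
    (∃ f : Fin (G.maxDegree / 2) → Set (Sym2 V),
      (∀ i, IsTwoRegularEdgeSet G (f i)) ∧
      (∀ i j, i ≠ j → Disjoint (f i) (f j)) ∧
      (∀ e, e ∈ G.edgeSet ↔ ∃ i, e ∈ f i)) ∧
    (∀ (k : ℕ) (f : Fin k → Set (Sym2 V)),
      (∀ i, IsTwoRegularEdgeSet G (f i) ∨ ∃ e ∈ G.edgeSet, f i = {e}) →
      (∀ i j, i ≠ j → Disjoint (f i) (f j)) →
      (∀ e, e ∈ G.edgeSet ↔ ∃ i, e ∈ f i) →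
      G.maxDegree / 2 ≤ k) := by
  have hmax0 : IsEmpty V → G.maxDegree = 0 := by
    intro h
    simp only [SimpleGraph.maxDegree, Finset.univ_eq_empty, Finset.image_empty]
    rfl
  have hmaxeven : Even G.maxDegree := by
    cases isEmpty_or_nonempty V with
    | inl h => rw [hmax0 h]; exact Even.zero
    | inr h =>
      obtain ⟨v, hv⟩ := G.exists_maximal_degree_vertex
      rw [hv]
      exact heven v
  obtain ⟨c, hc⟩ := hmaxeven
  constructor
  · exact TwoRegAux.two_regular_decomp (G.maxDegree / 2) G heven
      (fun v => by have := G.degree_le_maxDegree v; omega)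
  · intro k f hparts hdis hcov
    by_cases hD : G.maxDegree = 0
    · omega
    · have hne : Nonempty V := by
        by_contra hc2
        exact hD (hmax0 (not_nonempty_iff.1 hc2))
      obtain ⟨v, hv⟩ := G.exists_maximal_degree_vertex
      letI : ∀ i : Fin k, DecidablePred (· ∈ f i) := fun i => Classical.decPred _
      set I := G.incidenceFinset v with hI
      have hIcard : I.card = G.degree v := by rw [hI]; exact G.card_incidenceFinset_eq_degree v
      have hmemI : ∀ e, e ∈ I ↔ e ∈ G.edgeSet ∧ v ∈ e := fun e => by
        rw [hI]
        show e ∈ (G.incidenceSet v).toFinset ↔ _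
        rw [Set.mem_toFinset]
        exact Iff.rfl
      have hsub : I ⊆ Finset.univ.biUnion (fun i : Fin k => I.filter (fun e => e ∈ f i)) := by
        intro e he
        have heE : e ∈ G.edgeSet := ((hmemI e).1 he).1
        obtain ⟨i, hi⟩ := (hcov e).1 heE
        exact Finset.mem_biUnion.2 ⟨i, Finset.mem_univ _, Finset.mem_filter.2 ⟨he, hi⟩⟩
      have hfib : ∀ i : Fin k, (I.filter (fun e => e ∈ f i)).card ≤ 2 := by
        intro i
        rcases hparts i with ⟨K, hK1, hK2, hK3⟩ | ⟨e0, _, hfi⟩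
        · letI : DecidableRel K.Adj := Classical.decRel _
          have hKdeg : (K.neighborFinset v).card ≤ 2 := by
            have h1 : (K.neighborSet v).ncard = (K.neighborFinset v).card := by
              rw [SimpleGraph.neighborFinset, Set.ncard_eq_toFinset_card']
            rcases hK2 v with h | h <;> omega
          refine le_trans (Finset.card_le_card_of_injOn
            (fun e => if h : v ∈ e then Sym2.Mem.other' h else v) ?_ ?_) hKdeg
          · intro e he
            rw [Finset.mem_coe, Finset.mem_filter] at he
            obtain ⟨heI, hef⟩ := he
            have hve : v ∈ e := ((hmemI e).1 heI).2
            beta_reduce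
            rw [dif_pos hve]
            rw [Finset.mem_coe, mem_neighborFinset, ← SimpleGraph.mem_edgeSet, Sym2.other_spec' hve]
            rw [hK3] at hef
            exact hef
          · intro e1 he1 e2 he2 heq
            rw [Finset.coe_filter, Set.mem_setOf_eq] at he1 he2
            have hv1 : v ∈ e1 := ((hmemI e1).1 he1.1).2
            have hv2 : v ∈ e2 := ((hmemI e2).1 he2.1).2
            beta_reduce at heq
            rw [dif_pos hv1, dif_pos hv2] at heq
            rw [← Sym2.other_spec' hv1, ← Sym2.other_spec' hv2, heq]
        · have hss : I.filter (fun e => e ∈ f i) ⊆ {e0} := by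
            intro x hx
            rw [Finset.mem_filter, hfi] at hx
            rw [Finset.mem_singleton]
            exact hx.2
          calc (I.filter (fun e => e ∈ f i)).card ≤ ({e0} : Finset (Sym2 V)).card :=
                Finset.card_le_card hss
            _ ≤ 2 := by simp
      have hchain : G.degree v ≤ 2 * k := by
        calc G.degree v = I.card := hIcard.symm
          _ ≤ (Finset.univ.biUnion (fun i : Fin k => I.filter (fun e => e ∈ f i))).card :=
              Finset.card_le_card hsub
          _ ≤ ∑ i : Fin k, (I.filter (fun e => e ∈ f i)).card := Finset.card_biUnion_le
          _ ≤ ∑ _i : Fin k, 2 := Finset.sum_le_sum (fun i _ => hfib i)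
          _ = 2 * k := by rw [Finset.sum_const, Finset.card_univ, Fintype.card_fin, smul_eq_mul,
                mul_comm]
      rw [hv] at *
      omega
end

section
/- Let G be a simple graph with exactly 2k vertices of odd degree, and let P'_1, ..., P'_k be paths in G that are not pairwise edge-disjoint, such that every vertex of odd degree in G is an endpoint of some path P'_i. Then there exist pairwise edge-disjoint paths P_1, ..., P_k in G such that every vertex of odd degree in G is an endpoint of some path P_i, and the total number of edges of P_1, ..., P_k is strictly smaller than the total number of edges of P'_1, ..., P'_k. -/
/-!
If two of the paths share an edge `xy`, write them as `A·xy·B` and `C·xy·D` (the second one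
possibly traversing the edge as `yx`). Recombining the four pieces into `A·C⁻¹` and `B⁻¹·D`
(respectively `A·D` and `C·B`) gives two walks with the same four endpoints and two edges fewer
in total, and shortening them to paths only helps. The total length cannot decrease forever, so
iterating this exchange ends in a pairwise edge-disjoint family.
-/

theorem Fintype.sum_add_add_eq_of_forall_ne {ι M : Type*} [Fintype ι] [DecidableEq ι]
    [AddCommMonoid M] {f g : ι → M} {i j : ι} (hij : i ≠ j)
    (h : ∀ t, t ≠ i → t ≠ j → g t = f t) :
    ∑ t, g t + (f i + f j) = ∑ t, f t + (g i + g j) := by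
  have hcompl : ∑ t ∈ ({i, j} : Finset ι)ᶜ, g t = ∑ t ∈ ({i, j} : Finset ι)ᶜ, f t :=
    Finset.sum_congr rfl fun t ht => by
      simp only [Finset.mem_compl, Finset.mem_insert, Finset.mem_singleton, not_or] at ht
      exact h t ht.1 ht.2
  rw [← Finset.sum_add_sum_compl {i, j} g, ← Finset.sum_add_sum_compl {i, j} f,
    Finset.sum_pair hij, Finset.sum_pair hij, hcompl]
  abel

namespace SimpleGraph

variable {V ι : Type*} {G : SimpleGraph V}

theorem Walk.exists_eq_append_cons_of_mem_edges {a b : V} {e : Sym2 V} {p : G.Walk a b}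
    (he : e ∈ p.edges) :
    ∃ (x y : V) (h : G.Adj x y) (A : G.Walk a x) (B : G.Walk y b),
      e = s(x, y) ∧ p = A.append (cons h B) := by
  induction p with
  | nil => simp at he
  | cons h q ih =>
    rcases List.mem_cons.mp he with rfl | he
    · exact ⟨_, _, h, nil, q, rfl, rfl⟩
    · obtain ⟨x, y, hxy, A, B, rfl, rfl⟩ := ih he
      exact ⟨x, y, hxy, cons h A, B, rfl, rfl⟩

theorem Walk.exists_isPath_pair_of_mem_edges [DecidableEq V] {a b c d : V} {e : Sym2 V}
    {p : G.Walk a b} {q : G.Walk c d} (hp : e ∈ p.edges) (hq : e ∈ q.edges) :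
    ∃ (a' b' c' d' : V) (p' : G.Walk a' b') (q' : G.Walk c' d'), p'.IsPath ∧ q'.IsPath ∧
      ({a, b, c, d} : Set V) ⊆ {a', b', c', d'} ∧
      p'.length + q'.length + 2 ≤ p.length + q.length := by
  suffices ∃ (a' b' c' d' : V) (p' : G.Walk a' b') (q' : G.Walk c' d'),
      ({a, b, c, d} : Set V) ⊆ {a', b', c', d'} ∧
      p'.length + q'.length + 2 ≤ p.length + q.length by
    obtain ⟨a', b', c', d', p', q', hends, hlen⟩ := this
    refine ⟨a', b', c', d', p'.bypass, q'.bypass, p'.bypass_isPath, q'.bypass_isPath, hends, ?_⟩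
    have := p'.length_bypass_le_length
    have := q'.length_bypass_le_length
    omega
  obtain ⟨x, y, hxy, A, B, rfl, rfl⟩ := exists_eq_append_cons_of_mem_edges hp
  obtain ⟨x', y', hxy', C, D, he, rfl⟩ := exists_eq_append_cons_of_mem_edges hq
  rcases Sym2.eq_iff.mp he with ⟨rfl, rfl⟩ | ⟨rfl, rfl⟩
  · refine ⟨_, _, _, _, A.append C.reverse, B.reverse.append D, ?_, ?_⟩
    · intro w; simp only [Set.mem_insert_iff, Set.mem_singleton_iff]; tauto
    · simp only [length_append, length_cons, length_reverse]; omega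
  · refine ⟨_, _, _, _, A.append D, C.append B, ?_, ?_⟩
    · intro w; simp only [Set.mem_insert_iff, Set.mem_singleton_iff]; tauto
    · simp only [length_append, length_cons]; omega

def endpoints (f : ι → Σ a b : V, G.Walk a b) : Set V :=
  ⋃ t, {(f t).1, (f t).2.1}

@[simp]
theorem mem_endpoints {f : ι → Σ a b : V, G.Walk a b} {w : V} :
    w ∈ endpoints f ↔ ∃ t, w = (f t).1 ∨ w = (f t).2.1 := by
  simp [endpoints]

variable [Fintype ι]

def totalLength (f : ι → Σ a b : V, G.Walk a b) : ℕ :=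
  ∑ t, (f t).2.2.length

theorem exists_totalLength_lt_of_not_pairwise_disjoint [DecidableEq V]
    {f : ι → Σ a b : V, G.Walk a b} (hf : ∀ t, (f t).2.2.IsPath)
    (hd : ¬Pairwise fun i j => (f i).2.2.edges.Disjoint (f j).2.2.edges) :
    ∃ g : ι → Σ a b : V, G.Walk a b, (∀ t, (g t).2.2.IsPath) ∧
      endpoints f ⊆ endpoints g ∧ totalLength g < totalLength f := by
  classical
  obtain ⟨i, j, hij, e, hi, hj⟩ :
      ∃ i j, i ≠ j ∧ ∃ e, e ∈ (f i).2.2.edges ∧ e ∈ (f j).2.2.edges := by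
    simpa [Pairwise, List.Disjoint] using hd
  obtain ⟨a, b, c, d, p, q, hp, hq, hends, hlen⟩ := Walk.exists_isPath_pair_of_mem_edges hi hj
  set g := Function.update (Function.update f i ⟨a, b, p⟩) j ⟨c, d, q⟩
  have hgi : g i = ⟨a, b, p⟩ := by simp [g, hij]
  have hgj : g j = ⟨c, d, q⟩ := by simp [g]
  have hg : ∀ t, t ≠ i → t ≠ j → g t = f t := fun t hti htj => by simp [g, hti, htj]
  refine ⟨g, fun t => ?_, fun w hw => ?_, ?_⟩
  · by_cases hti : t = i
    · subst hti; rwa [hgi]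
    by_cases htj : t = j
    · subst htj; rwa [hgj]
    rw [hg t hti htj]; exact hf t
  · obtain ⟨t, ht⟩ := mem_endpoints.mp hw
    by_cases htij : t = i ∨ t = j
    · have : w ∈ ({(f i).1, (f i).2.1, (f j).1, (f j).2.1} : Set V) := by
        simp only [Set.mem_insert_iff, Set.mem_singleton_iff]
        rcases htij with rfl | rfl <;> tauto
      rcases hends this with h | h | h | h
      · exact mem_endpoints.mpr ⟨i, by rw [hgi]; exact Or.inl h⟩
      · exact mem_endpoints.mpr ⟨i, by rw [hgi]; exact Or.inr h⟩
      · exact mem_endpoints.mpr ⟨j, by rw [hgj]; exact Or.inl h⟩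
      · exact mem_endpoints.mpr ⟨j, by rw [hgj]; exact Or.inr h⟩
    · push Not at htij
      exact mem_endpoints.mpr ⟨t, by rwa [hg t htij.1 htij.2]⟩
  · have hsum := Fintype.sum_add_add_eq_of_forall_ne (f := fun t => (f t).2.2.length)
      (g := fun t => (g t).2.2.length) hij fun t hti htj =>
        congrArg (fun s => s.2.2.length) (hg t hti htj)
    rw [hgi, hgj] at hsum
    dsimp only at hsum
    unfold totalLength
    omega

theorem exists_pairwise_disjoint_of_isPath [DecidableEq V] {f : ι → Σ a b : V, G.Walk a b}
    (hf : ∀ t, (f t).2.2.IsPath) :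
    ∃ g : ι → Σ a b : V, G.Walk a b, (∀ t, (g t).2.2.IsPath) ∧
      (Pairwise fun i j => (g i).2.2.edges.Disjoint (g j).2.2.edges) ∧
      endpoints f ⊆ endpoints g ∧ totalLength g ≤ totalLength f := by
  induction hn : totalLength f using Nat.strong_induction_on generalizing f with
  | _ n ih =>
    by_cases hd : Pairwise fun i j => (f i).2.2.edges.Disjoint (f j).2.2.edges
    · exact ⟨f, hf, hd, subset_rfl, hn.le⟩
    obtain ⟨g, hg, hfg, hlt⟩ := exists_totalLength_lt_of_not_pairwise_disjoint hf hd
    obtain ⟨h, hh, hdisj, hgh, hle⟩ := ih _ (hn ▸ hlt) hg rfl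
    exact ⟨h, hh, hdisj, hfg.trans hgh, hn ▸ hle.trans hlt.le⟩

end SimpleGraph

open SimpleGraph in
theorem shorter_edge_disjoint_paths_linking_odd_vertices_general
    {V : Type*} [Fintype V] [DecidableEq V] (G : SimpleGraph V) [DecidableRel G.Adj]
    (k : ℕ)
    (u' v' : Fin k → V) (p' : ∀ i, G.Walk (u' i) (v' i))
    (hp' : ∀ i, (p' i).IsPath)
    (hnotdisj : ∃ i j, i ≠ j ∧ ∃ e, e ∈ (p' i).edges ∧ e ∈ (p' j).edges)
    (hcov' : ∀ w : V, Odd (G.degree w) → ∃ i, w = u' i ∨ w = v' i) :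
    ∃ (u v : Fin k → V) (p : ∀ i, G.Walk (u i) (v i)),
      (∀ i, (p i).IsPath) ∧
      (∀ i j, i ≠ j → ∀ e, e ∈ (p i).edges → e ∉ (p j).edges) ∧
      (∀ w : V, Odd (G.degree w) → ∃ i, w = u i ∨ w = v i) ∧
      (∑ i, (p i).length) < (∑ i, (p' i).length) := by
  let f : Fin k → Σ a b : V, G.Walk a b := fun i => ⟨u' i, v' i, p' i⟩
  have hnot : ¬Pairwise fun i j => (f i).2.2.edges.Disjoint (f j).2.2.edges := by
    obtain ⟨i, j, hij, e, hi, hj⟩ := hnotdisj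
    exact fun hd => hd hij hi hj
  obtain ⟨g, hg, hfg, hlt⟩ := exists_totalLength_lt_of_not_pairwise_disjoint hp' hnot
  obtain ⟨h, hh, hdisj, hgh, hle⟩ := exists_pairwise_disjoint_of_isPath hg
  refine ⟨fun i => (h i).1, fun i => (h i).2.1, fun i => (h i).2.2, hh,
    fun i j hij e hi hj => hdisj hij hi hj, fun w hw => ?_, hle.trans_lt hlt⟩
  obtain ⟨i, hi⟩ := hcov' w hw
  exact mem_endpoints.mp (hgh (hfg (mem_endpoints.mpr ⟨i, hi⟩)))

/-- Let `G` be a simple graph with exactly `2k` vertices of odd degree, and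
let `P'_1, …, P'_k` be paths in `G` that are NOT pairwise edge-disjoint, such that every
vertex of odd degree in `G` is an endpoint of some `P'_i`.  Then there exist pairwise
edge-disjoint paths `P_1, …, P_k` in `G` such that every vertex of odd degree in `G` is an
endpoint of some `P_i`, with strictly smaller total number of edges. -/
theorem shorter_edge_disjoint_paths_linking_odd_vertices
    {V : Type*} [Fintype V] [DecidableEq V] (G : SimpleGraph V) [DecidableRel G.Adj]
    (k : ℕ)
    (hodd : (Finset.univ.filter fun v => Odd (G.degree v)).card = 2 * k)
    (u' v' : Fin k → V) (p' : ∀ i, G.Walk (u' i) (v' i))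
    (hp' : ∀ i, (p' i).IsPath)
    (hnotdisj : ∃ i j, i ≠ j ∧ ∃ e, e ∈ (p' i).edges ∧ e ∈ (p' j).edges)
    (hcov' : ∀ w : V, Odd (G.degree w) → ∃ i, w = u' i ∨ w = v' i) :
    ∃ (u v : Fin k → V) (p : ∀ i, G.Walk (u i) (v i)),
      (∀ i, (p i).IsPath) ∧
      (∀ i j, i ≠ j → ∀ e, e ∈ (p i).edges → e ∉ (p j).edges) ∧
      (∀ w : V, Odd (G.degree w) → ∃ i, w = u i ∨ w = v i) ∧
      (∑ i, (p i).length) < (∑ i, (p' i).length) :=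
  shorter_edge_disjoint_paths_linking_odd_vertices_general G k u' v' p' hp' hnotdisj hcov'
end

section
/- Let G be a connected simple graph on n vertices, and let v be a cut vertex of G, so that G is the union of subgraphs G_1 and G_2 with V(G_1) ∩ V(G_2) = {v}, E(G_1) ∪ E(G_2) = E(G), and no edge of G joins a vertex of V(G_1)\{v} to a vertex of V(G_2)\{v}. Then g_ce(G) = g_ce(G_1) + g_ce(G_2), where g_ce denotes the minimum number of subsets in a cover by cycles and edges. -/
/-- `gce G` is the minimum number of subsets in a cover of `G` by cycles and edges:
the least `k` such that there are `k` subsets of `E(G)`, each either the edge set of a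
cycle of `G` or a single edge, whose union is `E(G)`. -/
noncomputable def gce {V : Type*} (G : SimpleGraph V) : ℕ :=
  sInf {k : ℕ | ∃ f : Fin k → Set (Sym2 V),
    (∀ i, (∃ (u : V) (w : G.Walk u u), w.IsCycle ∧ f i = {e | e ∈ w.edges}) ∨
          (∃ e ∈ G.edgeSet, f i = {e})) ∧
    (∀ e, e ∈ G.edgeSet ↔ ∃ i, e ∈ f i)}

open SimpleGraph

section Aux

variable {V : Type*} [DecidableEq V] {G : SimpleGraph V}

omit [DecidableEq V] in
/-- Any edge of `G` incident to a vertex of `A.verts` other than `v` lies in `A`. -/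
lemma side_of_adj (A B : G.Subgraph) (v : V)
    (hverts : A.verts ∩ B.verts = {v}) (hunion : A ⊔ B = ⊤)
    {x y : V} (h : G.Adj x y) (hx : x ∈ A.verts) (hxv : x ≠ v) : A.Adj x y := by
  have htop : (A ⊔ B).Adj x y := by rw [hunion]; exact h
  rcases SimpleGraph.Subgraph.sup_adj.1 htop with h1 | h2
  · exact h1
  · exact absurd (show x ∈ ({v} : Set V) from hverts ▸ ⟨hx, B.edge_vert h2⟩) hxv

/-- Propagation: a walk starting in `A.verts \ {v}` that only hits `v` (if at all)
at its final vertex, at most once, has all its edges in `A`. -/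
lemma walk_edges_side (A B : G.Subgraph) (v : V)
    (hverts : A.verts ∩ B.verts = {v}) (hunion : A ⊔ B = ⊤) :
    ∀ {a b : V} (p : G.Walk a b), a ∈ A.verts → a ≠ v →
      (v ∈ p.support → b = v) → p.support.count v ≤ 1 →
      ∀ e ∈ p.edges, e ∈ A.edgeSet := by
  classical
  intro a b p
  induction p with
  | nil => intro _ _ _ _ e he; simp at he
  | @cons a c b h q ih =>
    intro ha hav h1 h2 e he
    have hedge : A.Adj a c := side_of_adj A B v hverts hunion h ha hav
    rw [SimpleGraph.Walk.edges_cons, List.mem_cons] at he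
    rcases he with rfl | he
    · exact hedge
    · have hc : c ∈ A.verts := A.edge_vert hedge.symm
      have hcount : q.support.count v ≤ 1 := by
        have : (SimpleGraph.Walk.cons h q).support.count v = q.support.count v := by
          simp [SimpleGraph.Walk.support_cons, List.count_cons, Ne.symm hav, hav]
        omega
      by_cases hcv : c = v
      · have hb : b = v :=
          h1 (by rw [SimpleGraph.Walk.support_cons]; exact List.mem_cons_of_mem _ (hcv ▸ q.start_mem_support))
        cases q with
        | nil => simp at he
        | @cons _ d _ h' q' =>
          exfalso
          have hvq' : v ∈ q'.support := hb ▸ q'.end_mem_support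
          rw [SimpleGraph.Walk.support_cons, SimpleGraph.Walk.support_cons,
            List.count_cons_of_ne hav, hcv, List.count_cons_self] at h2
          have := List.count_pos_iff.2 hvq'
          omega
      · exact ih hc hcv
          (fun hv => h1 (by rw [SimpleGraph.Walk.support_cons]; exact List.mem_cons_of_mem _ hv))
          hcount e he


/-- A cycle based at `v` has all edges in `A` or all edges in `B`. -/
lemma cycle_at_v_side (A B : G.Subgraph) (v : V)
    (hverts : A.verts ∩ B.verts = {v}) (hunion : A ⊔ B = ⊤)
    {c : G.Walk v v} (hc : c.IsCycle) :
    (∀ e ∈ c.edges, e ∈ A.edgeSet) ∨ (∀ e ∈ c.edges, e ∈ B.edgeSet) := by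
  cases c with
  | nil => exact absurd rfl hc.ne_nil
  | @cons _ x _ h p =>
    have hxv : x ≠ v := h.ne'
    have hx : x ∈ A.verts ∨ x ∈ B.verts := by
      have : x ∈ (A ⊔ B).verts := by rw [hunion, SimpleGraph.Subgraph.verts_top]; trivial
      rwa [SimpleGraph.Subgraph.verts_sup] at this
    have hcount : p.support.count v ≤ 1 := by
      have hnd : p.support.Nodup := by
        simpa using hc.support_nodup
      exact List.nodup_iff_count_le_one.1 hnd v
    have key : ∀ (A' B' : G.Subgraph), A'.verts ∩ B'.verts = {v} → A' ⊔ B' = ⊤ →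
        x ∈ A'.verts → ∀ e ∈ (SimpleGraph.Walk.cons h p).edges, e ∈ A'.edgeSet := by
      intro A' B' hverts' hunion' hx' e he
      rw [SimpleGraph.Walk.edges_cons, List.mem_cons] at he
      rcases he with rfl | he
      · have : A'.Adj x v := side_of_adj A' B' v hverts' hunion' h.symm hx' hxv
        exact SimpleGraph.Subgraph.mem_edgeSet.2 (A'.adj_symm this)
      · exact walk_edges_side A' B' v hverts' hunion' p hx' hxv (fun _ => rfl) hcount e he
    rcases hx with hx | hx
    · exact Or.inl (key A B hverts hunion hx)
    · exact Or.inr (key B A (by rw [Set.inter_comm]; exact hverts) (by rwa [sup_comm]) hx)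

/-- Any cycle of `G` has all edges in `A` or all edges in `B`. -/
lemma cycle_side (A B : G.Subgraph) (v : V)
    (hverts : A.verts ∩ B.verts = {v}) (hunion : A ⊔ B = ⊤)
    {u : V} {w : G.Walk u u} (hw : w.IsCycle) :
    (∀ e ∈ w.edges, e ∈ A.edgeSet) ∨ (∀ e ∈ w.edges, e ∈ B.edgeSet) := by
  by_cases hv : v ∈ w.support
  · have hrot := cycle_at_v_side A B v hverts hunion (hw.rotate hv)
    have hmem : ∀ e, (e ∈ (w.rotate v hv).edges ↔ e ∈ w.edges) :=
      fun e => (w.rotate_edges v hv).mem_iff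
    rcases hrot with h1 | h1
    · exact Or.inl fun e he => h1 e ((hmem e).2 he)
    · exact Or.inr fun e he => h1 e ((hmem e).2 he)
  · have huv : u ≠ v := fun h => hv (h ▸ w.start_mem_support)
    have hu : u ∈ A.verts ∨ u ∈ B.verts := by
      have : u ∈ (A ⊔ B).verts := by rw [hunion, SimpleGraph.Subgraph.verts_top]; trivial
      rwa [SimpleGraph.Subgraph.verts_sup] at this
    have hcount : w.support.count v ≤ 1 := by
      rw [List.count_eq_zero_of_not_mem hv]; omega
    have h1 : v ∈ w.support → u = v := fun h => absurd h hv
    rcases hu with hu | hu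
    · exact Or.inl (walk_edges_side A B v hverts hunion w hu huv h1 hcount)
    · exact Or.inr (walk_edges_side B A v (by rw [Set.inter_comm]; exact hverts)
        (by rwa [sup_comm]) w hu huv h1 hcount)

omit [DecidableEq V] in
/-- Lift a walk of `G` with edges in a subgraph `A` to a walk of `A.coe`. -/
lemma lift_walk {A : G.Subgraph} :
    ∀ {a b : V} (p : G.Walk a b) (ha : a ∈ A.verts) (hb : b ∈ A.verts),
      (∀ e ∈ p.edges, e ∈ A.edgeSet) →
      ∃ p' : A.coe.Walk ⟨a, ha⟩ ⟨b, hb⟩,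
        p'.edges.map (Sym2.map (↑)) = p.edges ∧ p'.support.map (↑) = p.support := by
  intro a b p
  induction p with
  | nil => intro ha hb _; exact ⟨SimpleGraph.Walk.nil, by simp, by simp⟩
  | @cons a c b h q ih =>
    intro ha hb hp
    have he : A.Adj a c := SimpleGraph.Subgraph.mem_edgeSet.1 (hp _ (by simp))
    have hc : c ∈ A.verts := A.edge_vert he.symm
    obtain ⟨q', h1, h2⟩ := ih hc hb (fun e he' => hp _ (by simp [he']))
    refine ⟨SimpleGraph.Walk.cons (by rw [SimpleGraph.Subgraph.coe_adj]; exact he) q', ?_, ?_⟩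
    · simp [h1]
    · simp [h2]

omit [DecidableEq V] in
/-- Lift a cycle of `G` with edges in a subgraph `A` to a cycle of `A.coe`. -/
lemma lift_cycle {A : G.Subgraph} {u : V} {w : G.Walk u u} (hw : w.IsCycle)
    (hsub : ∀ e ∈ w.edges, e ∈ A.edgeSet) :
    ∃ (u' : ↥A.verts) (w' : A.coe.Walk u' u'), w'.IsCycle ∧
      {e | e ∈ w'.edges} = Sym2.map (↑) ⁻¹' {e | e ∈ w.edges} := by
  have hu : u ∈ A.verts := by
    cases w with
    | nil => exact absurd rfl hw.ne_nil
    | @cons _ c _ h q =>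
      exact A.edge_vert (SimpleGraph.Subgraph.mem_edgeSet.1
        (hsub s(u, c) (by rw [SimpleGraph.Walk.edges_cons]; exact List.mem_cons_self)))
  obtain ⟨w', h1, h2⟩ := lift_walk w hu hu hsub
  refine ⟨⟨u, hu⟩, w', ⟨⟨⟨?_⟩, ?_⟩, ?_⟩, ?_⟩
  · have hnd := hw.edges_nodup
    rw [← h1] at hnd
    exact hnd.of_map _
  · intro hnil
    have h3 := hw.three_le_length
    have h4 := congrArg List.length h1
    rw [hnil] at h4
    simp only [SimpleGraph.Walk.edges_nil, List.map_nil, List.length_nil,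
      SimpleGraph.Walk.length_edges] at h4
    omega
  · have hnd := hw.support_nodup
    rw [← h2, ← List.map_tail] at hnd
    exact hnd.of_map _
  · ext e'
    simp only [Set.mem_setOf_eq, Set.mem_preimage]
    rw [← h1]
    exact (List.mem_map_of_injective (Sym2.map.injective Subtype.val_injective)).symm

/-- Every finite graph has a cover by cycles and edges. -/
lemma exists_cover {W : Type*} [Finite W] (H : SimpleGraph W) :
    ∃ k : ℕ, ∃ f : Fin k → Set (Sym2 W),
      (∀ i, (∃ (u : W) (w : H.Walk u u), w.IsCycle ∧ f i = {e | e ∈ w.edges}) ∨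
            (∃ e ∈ H.edgeSet, f i = {e})) ∧
      (∀ e, e ∈ H.edgeSet ↔ ∃ i, e ∈ f i) := by
  classical
  haveI : Fintype H.edgeSet := Fintype.ofFinite _
  refine ⟨Fintype.card H.edgeSet,
    fun i => {((Fintype.equivFin H.edgeSet).symm i : Sym2 W)}, ?_, ?_⟩
  · intro i
    exact Or.inr ⟨_, ((Fintype.equivFin H.edgeSet).symm i).2, rfl⟩
  · intro e
    constructor
    · intro he
      exact ⟨Fintype.equivFin H.edgeSet ⟨e, he⟩, by simp⟩
    · rintro ⟨i, hi⟩
      rw [Set.mem_singleton_iff] at hi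
      rw [hi]
      exact ((Fintype.equivFin H.edgeSet).symm i).2

/-- The infimum in the definition of `gce` is attained. -/
lemma gce_spec {W : Type*} [Finite W] (H : SimpleGraph W) :
    ∃ f : Fin (gce H) → Set (Sym2 W),
      (∀ i, (∃ (u : W) (w : H.Walk u u), w.IsCycle ∧ f i = {e | e ∈ w.edges}) ∨
            (∃ e ∈ H.edgeSet, f i = {e})) ∧
      (∀ e, e ∈ H.edgeSet ↔ ∃ i, e ∈ f i) := by
  have hne : {k : ℕ | ∃ f : Fin k → Set (Sym2 W),
      (∀ i, (∃ (u : W) (w : H.Walk u u), w.IsCycle ∧ f i = {e | e ∈ w.edges}) ∨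
            (∃ e ∈ H.edgeSet, f i = {e})) ∧
      (∀ e, e ∈ H.edgeSet ↔ ∃ i, e ∈ f i)}.Nonempty := by
    obtain ⟨k, hk⟩ := exists_cover H
    exact ⟨k, hk⟩
  exact Nat.sInf_mem hne

omit [DecidableEq V] in
lemma mem_G_of_coe (A : G.Subgraph) {e' : Sym2 ↥A.verts} (h : e' ∈ A.coe.edgeSet) :
    Sym2.map (↑) e' ∈ G.edgeSet := by
  rw [SimpleGraph.Subgraph.edgeSet_coe] at h
  exact A.edgeSet_subset h

omit [DecidableEq V] in
/-- Upper bound: covers of the two parts combine to a cover of `G`. -/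
lemma gce_le_add [Finite V] (G₁ G₂ : G.Subgraph) (hunion : G₁ ⊔ G₂ = ⊤) :
    gce G ≤ gce G₁.coe + gce G₂.coe := by
  classical
  set k₁ := gce G₁.coe with hk₁
  set k₂ := gce G₂.coe with hk₂
  obtain ⟨f₁, hf₁, hc₁⟩ := gce_spec G₁.coe
  obtain ⟨f₂, hf₂, hc₂⟩ := gce_spec G₂.coe
  let F : Fin (k₁ + k₂) → Set (Sym2 V) :=
    Fin.addCases (fun i => Sym2.map (↑) '' f₁ i) (fun j => Sym2.map (↑) '' f₂ j)
  have hF1 : ∀ i, F (Fin.castAdd k₂ i) = Sym2.map (↑) '' f₁ i := fun i => by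
    simp only [F, Fin.addCases_left]
  have hF2 : ∀ j, F (Fin.natAdd k₁ j) = Sym2.map (↑) '' f₂ j := fun j => by
    simp only [F, Fin.addCases_right]
  have key : ∀ (A : G.Subgraph) (s : Set (Sym2 ↥A.verts)),
      ((∃ (u : ↥A.verts) (w : A.coe.Walk u u), w.IsCycle ∧ s = {e | e ∈ w.edges}) ∨
        (∃ e ∈ A.coe.edgeSet, s = {e})) →
      ((∃ (u : V) (w : G.Walk u u), w.IsCycle ∧ Sym2.map (↑) '' s = {e | e ∈ w.edges}) ∨
        (∃ e ∈ G.edgeSet, Sym2.map (↑) '' s = {e})) := by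
    intro A s hs
    rcases hs with ⟨u, w, hw, rfl⟩ | ⟨e, he, rfl⟩
    · left
      refine ⟨(u : V), w.map A.hom, hw.map SimpleGraph.Subgraph.hom_injective, ?_⟩
      ext e
      simp only [Set.mem_image, Set.mem_setOf_eq, SimpleGraph.Walk.edges_map, List.mem_map,
        SimpleGraph.Subgraph.coe_hom]
      erw [SimpleGraph.Walk.edges_map, List.mem_map]
      rfl
    · right
      exact ⟨Sym2.map (↑) e, mem_G_of_coe A he, by rw [Set.image_singleton]⟩
  refine Nat.sInf_le ⟨F, ?_, ?_⟩
  · intro i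
    by_cases hi : (i : ℕ) < k₁
    · have hieq : i = Fin.castAdd k₂ ⟨i, hi⟩ := by ext; simp
      rw [hieq, hF1]
      exact key G₁ _ (hf₁ _)
    · have hi2 : (i : ℕ) - k₁ < k₂ := by omega
      have hieq : i = Fin.natAdd k₁ ⟨(i : ℕ) - k₁, hi2⟩ := by
        apply Fin.ext; simp only [Fin.coe_natAdd]; omega
      rw [hieq, hF2]
      exact key G₂ _ (hf₂ _)
  · intro e
    constructor
    · intro he
      have hmem : e ∈ G₁.edgeSet ∪ G₂.edgeSet := by
        rw [← SimpleGraph.Subgraph.edgeSet_sup, hunion, SimpleGraph.Subgraph.edgeSet_top]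
        exact he
      rcases hmem with h | h
      · rw [← SimpleGraph.Subgraph.image_coe_edgeSet_coe] at h
        obtain ⟨e', he', rfl⟩ := h
        obtain ⟨i, hi⟩ := (hc₁ e').1 he'
        exact ⟨Fin.castAdd k₂ i, by rw [hF1]; exact ⟨e', hi, rfl⟩⟩
      · rw [← SimpleGraph.Subgraph.image_coe_edgeSet_coe] at h
        obtain ⟨e', he', rfl⟩ := h
        obtain ⟨j, hj⟩ := (hc₂ e').1 he'
        exact ⟨Fin.natAdd k₁ j, by rw [hF2]; exact ⟨e', hj, rfl⟩⟩
    · rintro ⟨i, hi⟩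
      by_cases hlt : (i : ℕ) < k₁
      · have hieq : i = Fin.castAdd k₂ ⟨i, hlt⟩ := by ext; simp
        rw [hieq, hF1] at hi
        obtain ⟨e', he', rfl⟩ := hi
        exact mem_G_of_coe G₁ ((hc₁ e').2 ⟨_, he'⟩)
      · have hi2 : (i : ℕ) - k₁ < k₂ := by omega
        have hieq : i = Fin.natAdd k₁ ⟨(i : ℕ) - k₁, hi2⟩ := by
          apply Fin.ext; simp only [Fin.coe_natAdd]; omega
        rw [hieq, hF2] at hi
        obtain ⟨e', he', rfl⟩ := hi
        exact mem_G_of_coe G₂ ((hc₂ e').2 ⟨_, he'⟩)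

omit [DecidableEq V] in
/-- Lower bound helper: from a cover of `G`, the sets lying inside a subgraph `A`
give a cover of `A.coe`. -/
lemma gce_coe_le (A : G.Subgraph) {k : ℕ} (f : Fin k → Set (Sym2 V))
    (hf : ∀ i, (∃ (u : V) (w : G.Walk u u), w.IsCycle ∧ f i = {e | e ∈ w.edges}) ∨
          (∃ e ∈ G.edgeSet, f i = {e}))
    (hc : ∀ e, e ∈ G.edgeSet ↔ ∃ i, e ∈ f i)
    (P : Fin k → Prop) [DecidablePred P]
    (hP : ∀ i, P i → f i ⊆ A.edgeSet)
    (hP' : ∀ i e, e ∈ f i → e ∈ A.edgeSet → P i) :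
    gce A.coe ≤ Fintype.card {i // P i} := by
  classical
  let E : Fin (Fintype.card {i // P i}) ≃ {i // P i} := (Fintype.equivFin _).symm
  refine Nat.sInf_le ⟨fun j => Sym2.map (↑) ⁻¹' f (E j).1, ?_, ?_⟩
  · intro j
    rcases hf (E j).1 with ⟨u, w, hw, heq⟩ | ⟨e, heG, heq⟩
    · left
      have hsub : ∀ e ∈ w.edges, e ∈ A.edgeSet := fun e he =>
        hP _ (E j).2 (by rw [heq]; exact he)
      obtain ⟨u', w', hw', hset⟩ := lift_cycle hw hsub
      exact ⟨u', w', hw', by beta_reduce; rw [hset, heq]⟩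
    · right
      have heA : e ∈ A.edgeSet := hP _ (E j).2 (by rw [heq]; exact rfl)
      rw [← SimpleGraph.Subgraph.image_coe_edgeSet_coe] at heA
      obtain ⟨e', he', hmap⟩ := heA
      refine ⟨e', he', ?_⟩
      beta_reduce
      rw [heq]
      ext a
      simp only [Set.mem_preimage, Set.mem_singleton_iff]
      rw [← hmap]
      exact (Sym2.map.injective Subtype.val_injective).eq_iff
  · intro e'
    constructor
    · intro he'
      have h1 : Sym2.map (↑) e' ∈ A.edgeSet := by
        rw [SimpleGraph.Subgraph.edgeSet_coe] at he'
        exact he'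
      obtain ⟨i, hi⟩ := (hc _).1 (A.edgeSet_subset h1)
      have hPi : P i := hP' i _ hi h1
      refine ⟨E.symm ⟨i, hPi⟩, ?_⟩
      have : (E (E.symm ⟨i, hPi⟩)).1 = i := by rw [Equiv.apply_symm_apply]
      beta_reduce
      rw [Set.mem_preimage, this]
      exact hi
    · rintro ⟨j, hj⟩
      have h1 : Sym2.map (↑) e' ∈ A.edgeSet := hP _ (E j).2 hj
      rw [SimpleGraph.Subgraph.edgeSet_coe]
      exact h1

end Aux

/-- Let `G` be a connected simple graph, and let `v` be a cut vertex of
`G`, so that `G` is the union of subgraphs `G₁` and `G₂` with `V(G₁) ∩ V(G₂) = {v}`,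
`E(G₁) ∪ E(G₂) = E(G)` (here `G₁ ⊔ G₂ = ⊤`), and no edge of `G` joins a vertex of
`V(G₁) \ {v}` to a vertex of `V(G₂) \ {v}`.  Then `g_ce(G) = g_ce(G₁) + g_ce(G₂)`. -/
theorem gce_eq_add_of_cut_vertex
    {V : Type*} [Fintype V] [DecidableEq V] (G : SimpleGraph V)
    (hconn : G.Connected) (v : V)
    (hcut : ¬ (G.induce ({v}ᶜ : Set V)).Connected)
    (G₁ G₂ : G.Subgraph)
    (hverts : G₁.verts ∩ G₂.verts = {v})
    (hunion : G₁ ⊔ G₂ = ⊤)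
    (hsep : ∀ a b : V, G.Adj a b → a ∈ G₁.verts → a ≠ v → b ∈ G₂.verts → b ≠ v → False) :
    gce G = gce G₁.coe + gce G₂.coe := by
  classical
  obtain ⟨f, hf, hc⟩ := gce_spec G
  have hdisj : ∀ e, e ∈ G₁.edgeSet → e ∈ G₂.edgeSet → False := by
    intro e
    induction e using Sym2.ind with
    | _ x y =>
      intro h1 h2
      rw [SimpleGraph.Subgraph.mem_edgeSet] at h1 h2
      have hx : x = v := by
        have : x ∈ G₁.verts ∩ G₂.verts := ⟨G₁.edge_vert h1, G₂.edge_vert h2⟩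
        rwa [hverts] at this
      have hy : y = v := by
        have : y ∈ G₁.verts ∩ G₂.verts := ⟨G₁.edge_vert h1.symm, G₂.edge_vert h2.symm⟩
        rwa [hverts] at this
      exact (G₁.adj_sub h1).ne (hx.trans hy.symm)
  have hside : ∀ i, f i ⊆ G₁.edgeSet ∨ f i ⊆ G₂.edgeSet := by
    intro i
    rcases hf i with ⟨u, w, hw, heq⟩ | ⟨e, heG, heq⟩
    · rcases cycle_side G₁ G₂ v hverts hunion hw with h | h
      · exact Or.inl (by rw [heq]; intro e he; exact h e he)
      · exact Or.inr (by rw [heq]; intro e he; exact h e he)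
    · have hmem : e ∈ G₁.edgeSet ∪ G₂.edgeSet := by
        rw [← SimpleGraph.Subgraph.edgeSet_sup, hunion, SimpleGraph.Subgraph.edgeSet_top]
        exact heG
      rcases hmem with h | h
      · exact Or.inl (by rw [heq]; intro a ha; rw [Set.mem_singleton_iff] at ha; rwa [ha])
      · exact Or.inr (by rw [heq]; intro a ha; rw [Set.mem_singleton_iff] at ha; rwa [ha])
  set P : Fin (gce G) → Prop := fun i => f i ⊆ G₁.edgeSet with hPdef
  have h1le : gce G₁.coe ≤ Fintype.card {i // P i} := by
    refine gce_coe_le G₁ f hf hc P (fun i h => h) ?_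
    intro i e he heA
    rcases hside i with h | h
    · exact h
    · exact absurd (h he) (fun h2 => hdisj e heA h2)
  have h2le : gce G₂.coe ≤ Fintype.card {i // ¬ P i} := by
    refine gce_coe_le G₂ f hf hc (fun i => ¬ P i) ?_ ?_
    · intro i hnP
      rcases hside i with h | h
      · exact absurd h hnP
      · exact h
    · intro i e he heA hPi
      exact hdisj e (hPi he) heA
  have hcard : Fintype.card {i // P i} + Fintype.card {i // ¬ P i} = gce G := by
    have hcongr := Fintype.card_congr (Equiv.sumCompl P)
    rw [Fintype.card_sum, Fintype.card_fin] at hcongr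
    exact hcongr
  have hub : gce G ≤ gce G₁.coe + gce G₂.coe := gce_le_add G₁ G₂ hunion
  omega
end
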